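/- Let M_n be the number of binary sequences ε ∈ {0,1}^n with σ(ε) = 0, where σ(ε) is the parity of the number of pairs j < k with ε_j = 0 and ε_k = 1. Then M_n satisfies the recursion M_n = 2·M_{n-2} + 2^{n-2} for n ≥ 3. -/
import Mathlib


/-- For `ε : Fin n → Bool`, number of pairs `j < k` with `ε j = false` and `ε k = true`. -/
def sigmaCount (n : ℕ) (ε : Fin n → Bool) : ℕ :=
  (Finset.univ.filter (fun p : Fin n × Fin n => p.1 < p.2 ∧ ε p.1 = false ∧ ε p.2 = true)).card

/-- `M n` counts binary sequences of length `n` with `σ(ε)` even. -/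
def M (n : ℕ) : ℕ :=
  (Finset.univ.filter (fun ε : Fin n → Bool => sigmaCount n ε % 2 = 0)).card


lemma sigmaCount_eq_sum (n : ℕ) (ε : Fin n → Bool) :
    sigmaCount n ε = ∑ j : Fin n, ∑ k : Fin n,
      if j < k ∧ ε j = false ∧ ε k = true then 1 else 0 := by
  rw [sigmaCount, Finset.card_filter, Fintype.sum_prod_type]

lemma sigma_cons (n : ℕ) (a : Bool) (ε : Fin n → Bool) :
    sigmaCount (n+1) (Fin.cons a ε) =
      (if a = false then (Finset.univ.filter (fun k => ε k = true)).card else 0)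
        + sigmaCount n ε := by
  rw [sigmaCount_eq_sum, sigmaCount_eq_sum]
  rw [Fin.sum_univ_succ]
  congr 1
  · rw [Fin.sum_univ_succ]
    simp only [lt_self_iff_false, false_and, if_false, Fin.cons_zero, Fin.cons_succ,
      Fin.succ_pos, true_and, zero_add]
    cases a
    · rw [if_pos rfl, Finset.card_filter]
      exact Finset.sum_congr rfl fun k _ => by simp
    · simp
  · refine Finset.sum_congr rfl fun j _ => ?_
    rw [Fin.sum_univ_succ]
    simp [Fin.succ_lt_succ_iff]

lemma count_cons (n : ℕ) (b : Bool) (μ : Fin n → Bool) :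
    (Finset.univ.filter (fun k => (Fin.cons b μ : Fin (n+1) → Bool) k = true)).card =
      (if b = true then 1 else 0) + (Finset.univ.filter (fun k => μ k = true)).card := by
  rw [Finset.card_filter, Finset.card_filter, Fin.sum_univ_succ]
  simp

def S (n : ℕ) : ℤ := ∑ ε : Fin n → Bool, (-1:ℤ)^(sigmaCount n ε)

lemma sum_pi_succ (n : ℕ) (f : (Fin (n+1) → Bool) → ℤ) :
    ∑ ε : Fin (n+1) → Bool, f ε = ∑ a : Bool, ∑ ε : Fin n → Bool, f (Fin.cons a ε) := by
  rw [← Equiv.sum_comp (Fin.consEquiv (fun _ => Bool)) f, Fintype.sum_prod_type]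
  rfl

lemma S_rec (n : ℕ) : S (n+2) = 2 * S n := by
  rw [S, sum_pi_succ]
  rw [Finset.sum_congr rfl fun a _ => sum_pi_succ n _]
  rw [Finset.sum_congr rfl fun a _ => Finset.sum_comm]
  rw [Finset.sum_comm]
  rw [S, Finset.mul_sum]
  refine Finset.sum_congr rfl fun μ _ => ?_
  simp only [sigma_cons, count_cons]
  set o := (Finset.univ.filter (fun k => μ k = true)).card with ho
  set s := sigmaCount n μ with hs
  simp only [Fintype.sum_bool]
  norm_num [pow_add]
  have h : (-1:ℤ)^o * (-1)^o = 1 := by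
    rw [← pow_add, ← two_mul, pow_mul]; norm_num
  linear_combination ((-1:ℤ)^s) * h

lemma S_eq_M (n : ℕ) : S n = 2 * (M n : ℤ) - 2^n := by
  classical
  set p : (Fin n → Bool) → Prop := fun ε => sigmaCount n ε % 2 = 0 with hp
  have huniv : (Finset.univ : Finset (Fin n → Bool)).card = 2^n := by
    simp [Finset.card_univ]
  have hM : M n ≤ 2^n := by
    rw [M, ← huniv]; exact Finset.card_filter_le _ _
  have hcard : (Finset.univ.filter (fun ε => ¬ p ε)).card = 2^n - M n := by
    have h2 := Finset.card_filter_add_card_filter_not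
      (s := (Finset.univ : Finset (Fin n → Bool))) (p := p)
    rw [huniv] at h2
    have : (Finset.univ.filter p).card = M n := rfl
    omega
  rw [S, ← Finset.sum_filter_add_sum_filter_not Finset.univ p]
  have h1 : ∑ ε ∈ Finset.univ.filter p, (-1:ℤ)^(sigmaCount n ε) = (M n : ℤ) := by
    rw [Finset.sum_congr rfl (fun ε hε => ?_), Finset.sum_const, nsmul_eq_mul, mul_one, M]
    exact (Nat.even_iff.mpr (Finset.mem_filter.mp hε).2).neg_one_pow
  have h2 : ∑ ε ∈ Finset.univ.filter (fun ε => ¬ p ε), (-1:ℤ)^(sigmaCount n ε)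
      = -((2^n - M n : ℕ) : ℤ) := by
    rw [Finset.sum_congr rfl (fun ε hε => ?_), Finset.sum_const, nsmul_eq_mul, mul_neg_one, hcard]
    have := (Finset.mem_filter.mp hε).2
    exact (Nat.odd_iff.mpr (by omega)).neg_one_pow
  rw [h1, h2]
  have : ((2^n - M n : ℕ) : ℤ) = 2^n - M n := by push_cast [hM]; ring
  rw [this]; ring

theorem stmt_1 (n : ℕ) (hn : 3 ≤ n) : M n = 2 * M (n - 2) + 2 ^ (n - 2) := by
  obtain ⟨k, rfl⟩ : ∃ k, n = k + 2 := ⟨n - 2, by omega⟩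
  have hk : k + 2 - 2 = k := by omega
  rw [hk]
  have h := S_rec k
  rw [S_eq_M, S_eq_M] at h
  have h2 : ((2:ℤ))^(k+2) = 4 * 2^k := by ring
  have : (M (k+2) : ℤ) = 2 * M k + 2^k := by rw [h2] at h; linarith
  exact_mod_cast this
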